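/- Let a ≥ 1 and k ≥ 2 be integers and set b = ak+1. Let T be any tree with exactly k interior (non-leaf) vertices and b leaves. Then λ₁(T) ≤ σ₁(a,k,1) = (k + 2a + 1 − √((k−1)² + 4k − 4))/2, and equality holds if and only if T is isomorphic to the star-like path tree SLP(a+1, a; 0; k−1, 0). -/

import Mathlib

open scoped Classical
open Finset

/-- The Dirichlet energy `∑_{{x,y} ∈ E} (f(x) - f(y))²` of a function on the vertices,
computed as half of the sum over ordered adjacent pairs. -/
noncomputable def dirichletForm {V : Type*} [Fintype V] (G : SimpleGraph V) (f : V → ℝ) : ℝ :=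
  (∑ x : V, ∑ y : V, if G.Adj x y then (f x - f y) ^ 2 else 0) / 2

/-- The first Dirichlet eigenvalue of a graph `G` with boundary `B`:
the infimum of Rayleigh quotients of nonzero functions vanishing on `B`. -/
noncomputable def lambda1 {V : Type*} [Fintype V] (G : SimpleGraph V) (B : Finset V) : ℝ :=
  sInf { r : ℝ | ∃ f : V → ℝ, (∀ x ∈ B, f x = 0) ∧ f ≠ 0 ∧
    r = dirichletForm G f / ∑ x ∈ Bᶜ, f x ^ 2 }

/-- The distance from a vertex to a set of vertices. -/
noncomputable def distToSet {V : Type*} (G : SimpleGraph V) (B : Finset V) (v : V) : ℕ :=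
  sInf { n : ℕ | ∃ b ∈ B, G.dist v b = n }

/-- The inscribed radius of a graph with boundary: `max_{v ∈ V} dist(v, B)`. -/
noncomputable def inradius {V : Type*} [Fintype V] (G : SimpleGraph V) (B : Finset V) : ℕ :=
  Finset.univ.sup fun v => distToSet G B v

/-- The diameter of a graph: `max_{v,w ∈ V} dist(v, w)`. -/
noncomputable def graphDiam {V : Type*} [Fintype V] (G : SimpleGraph V) : ℕ :=
  Finset.univ.sup fun v => Finset.univ.sup fun w => G.dist v w

/-- The set of leaves (degree-one vertices) of a graph. -/
noncomputable def leaves {V : Type*} [Fintype V] (G : SimpleGraph V) : Finset V :=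
  Finset.univ.filter fun v => G.degree v = 1

/-- Vertex type of the star-like path tree `SLP(p, q; c; d, e)`:
`path i` are the path vertices `u₀, …, u_c`; `dbr i` are the vertices `u_{0,i}` attached
to `u₀`; `ebr j` are the vertices `u_{c,j}` attached to `u_c`; `pleaf0` are the `p`
pendant leaves at `u₀`; `pleafc` are the `p` pendant leaves at `u_c` (absent when
`c = 0`, since then `u_c = u₀`); `qleafD i m`, `qleafE j m`, `qleafM m m'` are the `q`
pendant leaves at `u_{0,i}`, at `u_{c,j}`, and at the interior path vertex `u_{m+1}`
(`1 ≤ m+1 ≤ c-1`), respectively. -/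
inductive SLPVert (p q c d e : ℕ) : Type where
  | path : Fin (c + 1) → SLPVert p q c d e
  | dbr : Fin d → SLPVert p q c d e
  | ebr : Fin e → SLPVert p q c d e
  | pleaf0 : Fin p → SLPVert p q c d e
  | pleafc : Fin (if c = 0 then 0 else p) → SLPVert p q c d e
  | qleafD : Fin d → Fin q → SLPVert p q c d e
  | qleafE : Fin e → Fin q → SLPVert p q c d e
  | qleafM : Fin (c - 1) → Fin q → SLPVert p q c d e
deriving DecidableEq, Fintype

/-- Base relation generating the edges of the star-like path tree. -/
def SLPRel {p q c d e : ℕ} : SLPVert p q c d e → SLPVert p q c d e → Prop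
  | .path i, .path j => (i : ℕ) + 1 = (j : ℕ)
  | .path i, .dbr _ => (i : ℕ) = 0
  | .path i, .ebr _ => (i : ℕ) = c
  | .path i, .pleaf0 _ => (i : ℕ) = 0
  | .path i, .pleafc _ => (i : ℕ) = c
  | .path i, .qleafM m _ => (i : ℕ) = (m : ℕ) + 1
  | .dbr i, .qleafD i' _ => i = i'
  | .ebr j, .qleafE j' _ => j = j'
  | _, _ => False

/-- The star-like path tree `SLP(p, q; c; d, e)`. -/
def SLP (p q c d e : ℕ) : SimpleGraph (SLPVert p q c d e) :=
  SimpleGraph.fromRel SLPRel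

/-- `σ₁(a,k,s) = (k + 2a + s − √((k+s−2)² + 4k − 4)) / 2`. -/
noncomputable def sigma1 (a k s : ℕ) : ℝ :=
  ((k : ℝ) + 2 * a + s - Real.sqrt (((k : ℝ) + s - 2) ^ 2 + 4 * k - 4)) / 2

section Sigma

lemma sigma_fact (a k : ℕ) (hk : 2 ≤ k) :
    ∃ s : ℝ, sigma1 a k 1 = (a : ℝ) + 1 - s ∧ 0 < s ∧ s < 1 ∧
      s ^ 2 + ((k : ℝ) - 1) * s - ((k : ℝ) - 1) = 0 := by
  have hk' : (2 : ℝ) ≤ (k : ℝ) := by exact_mod_cast hk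
  set D : ℝ := ((k : ℝ) + 1 - 2) ^ 2 + 4 * k - 4 with hD
  have hD0 : 0 ≤ D := by nlinarith [sq_nonneg ((k:ℝ) - 1)]
  have hsq : Real.sqrt D ^ 2 = D := Real.sq_sqrt hD0
  have hgt : (k : ℝ) - 1 < Real.sqrt D := by
    have h1 : Real.sqrt (((k:ℝ) - 1) ^ 2) < Real.sqrt D := by
      apply Real.sqrt_lt_sqrt (by positivity)
      nlinarith
    rwa [Real.sqrt_sq (by linarith)] at h1
  have hlt : Real.sqrt D < (k : ℝ) + 1 := by
    rw [show ((k:ℝ) + 1) = Real.sqrt (((k:ℝ)+1)^2) by rw [Real.sqrt_sq (by linarith)]]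
    apply Real.sqrt_lt_sqrt hD0
    nlinarith
  refine ⟨(Real.sqrt D - ((k : ℝ) - 1)) / 2, ?_, by linarith, by linarith, ?_⟩
  · rw [sigma1]
    push_cast
    ring
  · have : D = ((k:ℝ)-1)^2 + 4*((k:ℝ)-1) := by rw [hD]; ring
    nlinarith [hsq]

end Sigma
section Tree
variable {V : Type*} [Fintype V] {T : SimpleGraph V}
set_option linter.unusedSectionVars false

/-- number of leaf neighbors -/
noncomputable def lcount (T : SimpleGraph V) (x : V) : ℕ :=
  ((leaves T).filter (T.Adj x)).card

lemma mem_leaves_iff {x : V} : x ∈ leaves T ↔ T.degree x = 1 := by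
  simp [leaves]

lemma mem_interior_iff {x : V} : x ∈ (leaves T)ᶜ ↔ T.degree x ≠ 1 := by
  simp [leaves]

lemma leaf_nbr_eq {x z : V} (hx : x ∈ leaves T) (hz : T.Adj x z) :
    T.neighborFinset x = {z} := by
  have h1 : (T.neighborFinset x).card = 1 := mem_leaves_iff.1 hx
  obtain ⟨u, hu⟩ := Finset.card_eq_one.1 h1
  have : z ∈ T.neighborFinset x := by simpa [SimpleGraph.mem_neighborFinset] using hz
  rw [hu] at this ⊢
  simp only [Finset.mem_singleton] at this
  rw [this]

lemma no_adj_leaves (hconn : T.Connected) (hcard : 3 ≤ Fintype.card V)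
    {x y : V} (hx : x ∈ leaves T) (hy : y ∈ leaves T) (hxy : T.Adj x y) : False := by
  have hNx := leaf_nbr_eq hx hxy
  have hNy := leaf_nbr_eq hy hxy.symm
  have hex : ∃ z : V, z ∉ ({x, y} : Finset V) := by
    by_contra h
    push_neg at h
    have : (Finset.univ : Finset V) ⊆ {x, y} := fun z _ => h z
    have := Finset.card_le_card this
    have h2 : ({x, y} : Finset V).card ≤ 2 := Finset.card_insert_le _ _ |>.trans (by simp)
    simp only [Finset.card_univ] at this
    omega
  have key : ∀ (u zz : V) (p : T.Walk u zz), u ∈ ({x, y} : Finset V) → zz ∈ ({x, y} : Finset V) := by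
    intro u zz p
    induction p with
    | nil => exact fun h => h
    | cons h q ih =>
      rename_i u' w _
      intro hu
      apply ih
      simp only [Finset.mem_insert, Finset.mem_singleton] at hu ⊢
      rcases hu with rfl | rfl
      · right
        have : w ∈ T.neighborFinset u' := by simpa [SimpleGraph.mem_neighborFinset] using h
        rw [hNx] at this; simpa using this
      · left
        have : w ∈ T.neighborFinset u' := by simpa [SimpleGraph.mem_neighborFinset] using h
        rw [hNy] at this; simpa using this
  obtain ⟨z, hz⟩ := hex
  obtain ⟨p⟩ := hconn.preconnected x z
  exact hz (key x z p (by simp))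

lemma leaf_nbr_interior (hconn : T.Connected) (hcard : 3 ≤ Fintype.card V)
    {x z : V} (hx : x ∈ leaves T) (hz : T.Adj x z) : z ∈ (leaves T)ᶜ := by
  rw [Finset.mem_compl]
  intro hzl
  exact no_adj_leaves hconn hcard hx hzl hz

lemma sum_lcount (hconn : T.Connected) (hcard : 3 ≤ Fintype.card V) :
    ∑ x ∈ (leaves T)ᶜ, lcount T x = (leaves T).card := by
  unfold lcount
  have h1 : ∀ x, ((leaves T).filter (T.Adj x)).card
      = ∑ y ∈ leaves T, if T.Adj x y then 1 else 0 := by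
    intro x; rw [Finset.card_filter]
  simp_rw [h1]
  rw [Finset.sum_comm]
  have h2 : ∀ y ∈ leaves T, (∑ x ∈ (leaves T)ᶜ, if T.Adj x y then 1 else 0) = 1 := by
    intro y hy
    rw [← Finset.card_filter]
    have hdeg : (T.neighborFinset y).card = 1 := mem_leaves_iff.1 hy
    obtain ⟨z, hz⟩ := Finset.card_eq_one.1 hdeg
    have hadj : T.Adj y z := by
      rw [← SimpleGraph.mem_neighborFinset, hz]; simp
    have : (leaves T)ᶜ.filter (fun x => T.Adj x y) = {z} := by
      ext u
      simp only [Finset.mem_filter, Finset.mem_singleton]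
      constructor
      · rintro ⟨_, hu⟩
        have : u ∈ T.neighborFinset y := by
          simpa [SimpleGraph.mem_neighborFinset] using hu.symm
        rw [hz] at this; simpa using this
      · rintro rfl
        exact ⟨leaf_nbr_interior hconn hcard hy hadj, hadj.symm⟩
    rw [this, Finset.card_singleton]
  rw [Finset.sum_congr rfl h2]
  simp

lemma sum_ite_adj_const (s : Finset V) (x : V) (c : ℝ) :
    (∑ y ∈ s, if T.Adj x y then c else 0) = (s.filter (T.Adj x)).card * c := by
  rw [← Finset.sum_filter, Finset.sum_const, nsmul_eq_mul]

lemma energy_decomp (f : V → ℝ) (hf : ∀ x ∈ leaves T, f x = 0) :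
    dirichletForm T f =
      (∑ x ∈ (leaves T)ᶜ, ∑ y ∈ (leaves T)ᶜ, if T.Adj x y then (f x - f y) ^ 2 else 0) / 2
      + ∑ x ∈ (leaves T)ᶜ, (lcount T x : ℝ) * f x ^ 2 := by
  unfold dirichletForm
  have hsplit : ∀ g : V → ℝ, (∑ x : V, g x) = ∑ x ∈ leaves T, g x + ∑ x ∈ (leaves T)ᶜ, g x :=
    fun g => (Finset.sum_add_sum_compl (leaves T) g).symm
  rw [hsplit]
  have hBB : ∀ x ∈ leaves T,
      (∑ y : V, if T.Adj x y then (f x - f y)^2 else 0)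
        = ∑ y ∈ (leaves T)ᶜ, if T.Adj x y then (f y) ^ 2 else 0 := by
    intro x hx
    rw [hsplit]
    have h0 : ∀ y ∈ leaves T, (if T.Adj x y then (f x - f y)^2 else 0) = 0 := by
      intro y hy
      rw [hf x hx, hf y hy]
      simp
    rw [Finset.sum_congr rfl h0]
    simp only [Finset.sum_const_zero, zero_add]
    apply Finset.sum_congr rfl
    intro y _
    rw [hf x hx]
    ring_nf
  have hIB : ∀ x ∈ (leaves T)ᶜ,
      (∑ y : V, if T.Adj x y then (f x - f y)^2 else 0)
        = (lcount T x : ℝ) * f x ^ 2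
          + ∑ y ∈ (leaves T)ᶜ, if T.Adj x y then (f x - f y) ^ 2 else 0 := by
    intro x _
    rw [hsplit]
    congr 1
    have h0 : ∀ y ∈ leaves T, (if T.Adj x y then (f x - f y)^2 else 0)
        = (if T.Adj x y then (f x)^2 else 0) := by
      intro y hy
      rw [hf y hy]
      ring_nf
    rw [Finset.sum_congr rfl h0, sum_ite_adj_const]
    rw [lcount]
  rw [Finset.sum_congr rfl hBB, Finset.sum_congr rfl hIB, Finset.sum_add_distrib]
  have hswap : (∑ x ∈ leaves T, ∑ y ∈ (leaves T)ᶜ, if T.Adj x y then (f y)^2 else 0)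
      = ∑ x ∈ (leaves T)ᶜ, (lcount T x : ℝ) * f x ^ 2 := by
    rw [Finset.sum_comm]
    apply Finset.sum_congr rfl
    intro y _
    have : ∀ x ∈ leaves T, (if T.Adj y x then (f y)^2 else 0) = (if T.Adj x y then (f y)^2 else 0) := by
      intro x _; simp [SimpleGraph.adj_comm]
    rw [← Finset.sum_congr rfl this, sum_ite_adj_const, lcount]
  rw [hswap]
  ring

end Tree
section Rayleigh
variable {V : Type*} [Fintype V] {T : SimpleGraph V}
set_option linter.unusedSectionVars false

lemma den_pos {f : V → ℝ} (hf : ∀ x ∈ leaves T, f x = 0) (hne : f ≠ 0) :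
    0 < ∑ x ∈ (leaves T)ᶜ, f x ^ 2 := by
  have h0 : ∀ x ∈ (leaves T)ᶜ, (0:ℝ) ≤ f x ^ 2 := fun x _ => sq_nonneg _
  obtain ⟨x, hx⟩ : ∃ x, f x ≠ 0 := Function.ne_iff.1 hne
  have hxI : x ∈ (leaves T)ᶜ := by
    rw [Finset.mem_compl]
    intro h
    exact hx (hf x h)
  apply Finset.sum_pos' h0 ⟨x, hxI, ?_⟩
  exact lt_of_le_of_ne (sq_nonneg _) (Ne.symm (pow_ne_zero 2 hx))

lemma dirichletForm_nonneg (f : V → ℝ) : 0 ≤ dirichletForm T f := by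
  unfold dirichletForm
  apply div_nonneg _ (by norm_num)
  apply Finset.sum_nonneg
  intro x _
  apply Finset.sum_nonneg
  intro y _
  split <;> [exact sq_nonneg _; exact le_refl 0]

lemma lambda1_set_bdd :
    BddBelow { r : ℝ | ∃ f : V → ℝ, (∀ x ∈ leaves T, f x = 0) ∧ f ≠ 0 ∧
      r = dirichletForm T f / ∑ x ∈ (leaves T)ᶜ, f x ^ 2 } := by
  refine ⟨0, ?_⟩
  rintro r ⟨f, hf, hne, rfl⟩
  exact div_nonneg (dirichletForm_nonneg f) (le_of_lt (den_pos hf hne))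

lemma lambda1_le (f : V → ℝ) (hf : ∀ x ∈ leaves T, f x = 0) (hne : f ≠ 0) :
    lambda1 T (leaves T) ≤ dirichletForm T f / ∑ x ∈ (leaves T)ᶜ, f x ^ 2 :=
  csInf_le lambda1_set_bdd ⟨f, hf, hne, rfl⟩

lemma lambda1_ge (c : ℝ) (hne : ∃ f : V → ℝ, (∀ x ∈ leaves T, f x = 0) ∧ f ≠ 0)
    (h : ∀ f : V → ℝ, (∀ x ∈ leaves T, f x = 0) → f ≠ 0 →
      c * (∑ x ∈ (leaves T)ᶜ, f x ^ 2) ≤ dirichletForm T f) :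
    c ≤ lambda1 T (leaves T) := by
  apply le_csInf
  · obtain ⟨f, hf, hne'⟩ := hne
    exact ⟨_, f, hf, hne', rfl⟩
  · rintro r ⟨f, hf, hne', rfl⟩
    rw [le_div_iff₀ (den_pos hf hne')]
    exact h f hf hne'

lemma test_comp (hconn : T.Connected) (hcard : 3 ≤ Fintype.card V)
    {v : V} (hv : v ∈ (leaves T)ᶜ) (x₀ : ℝ) :
    dirichletForm T (fun x => if x = v then x₀ else if x ∈ (leaves T)ᶜ then 1 else 0)
      = (((leaves T)ᶜ.filter (T.Adj v)).card : ℝ) * (x₀ - 1) ^ 2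
        + (lcount T v : ℝ) * x₀ ^ 2 + (((leaves T).card : ℝ) - (lcount T v : ℝ)) ∧
    (∑ x ∈ (leaves T)ᶜ, (if x = v then x₀ else if x ∈ (leaves T)ᶜ then 1 else 0) ^ 2)
      = x₀ ^ 2 + (((leaves T)ᶜ.card : ℝ) - 1) := by
  set I := (leaves T)ᶜ with hI
  set f : V → ℝ := fun x => if x = v then x₀ else if x ∈ I then 1 else 0 with hfdef
  have hfv : f v = x₀ := by simp [hfdef]
  have hfw : ∀ w ∈ I, w ≠ v → f w = 1 := by
    intro w hw hne
    simp [hfdef, hne, hw]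
  have hf : ∀ x ∈ leaves T, f x = 0 := by
    intro x hx
    have h1 : x ≠ v := by rintro rfl; simp [hI, Finset.mem_compl, hx] at hv
    have h2 : x ∉ I := by simp [hI, hx]
    simp [hfdef, h1, h2]
  have hone : 1 ≤ I.card := Finset.card_pos.2 ⟨v, hv⟩
  constructor
  · rw [energy_decomp f hf]
    have hrow_v : (∑ y ∈ I, if T.Adj v y then (f v - f y) ^ 2 else 0)
        = (I.filter (T.Adj v)).card * (x₀ - 1) ^ 2 := by
      rw [← sum_ite_adj_const]
      apply Finset.sum_congr rfl
      intro y hy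
      by_cases hadj : T.Adj v y
      · have hyv : y ≠ v := (T.ne_of_adj hadj).symm
        rw [if_pos hadj, if_pos hadj, hfv, hfw y hy hyv]
      · rw [if_neg hadj, if_neg hadj]
    have hrow_w : ∀ x ∈ I.erase v,
        (∑ y ∈ I, if T.Adj x y then (f x - f y) ^ 2 else 0)
          = if T.Adj x v then (x₀ - 1) ^ 2 else 0 := by
      intro x hx
      obtain ⟨hxv, hxI⟩ := Finset.mem_erase.1 hx
      have : ∀ y ∈ I, (if T.Adj x y then (f x - f y) ^ 2 else 0)
          = if y = v then (if T.Adj x v then (x₀ - 1) ^ 2 else 0) else 0 := by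
        intro y hy
        by_cases hyv : y = v
        · rw [hyv, if_pos rfl, hfv, hfw x hxI hxv]
          by_cases hadj : T.Adj x v
          · rw [if_pos hadj, if_pos hadj]
            ring
          · rw [if_neg hadj, if_neg hadj]
        · rw [if_neg hyv]
          by_cases hadj : T.Adj x y
          · rw [if_pos hadj, hfw x hxI hxv, hfw y hy hyv]
            ring
          · rw [if_neg hadj]
      rw [Finset.sum_congr rfl this, Finset.sum_ite_eq' I v]
      exact if_pos hv
    have hcardeq : ((I.erase v).filter (fun x => T.Adj x v)).card
        = (I.filter (T.Adj v)).card := by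
      congr 1
      ext u
      simp only [Finset.mem_filter, Finset.mem_erase]
      constructor
      · rintro ⟨⟨_, hu⟩, hadj⟩
        exact ⟨hu, hadj.symm⟩
      · rintro ⟨hu, hadj⟩
        exact ⟨⟨(T.ne_of_adj hadj).symm, hu⟩, hadj.symm⟩
    have hDD : (∑ x ∈ I, ∑ y ∈ I, if T.Adj x y then (f x - f y) ^ 2 else 0)
        = 2 * ((I.filter (T.Adj v)).card * (x₀ - 1) ^ 2) := by
      rw [← Finset.add_sum_erase _ _ hv, hrow_v, Finset.sum_congr rfl hrow_w,
        ← Finset.sum_filter, Finset.sum_const, nsmul_eq_mul, hcardeq]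
      ring
    have hL : (∑ x ∈ I, (lcount T x : ℝ) * f x ^ 2)
        = (lcount T v : ℝ) * x₀ ^ 2 + (((leaves T).card : ℝ) - (lcount T v : ℝ)) := by
      rw [← Finset.add_sum_erase _ _ hv, hfv]
      congr 1
      have : ∀ w ∈ I.erase v, (lcount T w : ℝ) * f w ^ 2 = (lcount T w : ℝ) := by
        intro w hw
        obtain ⟨hwv, hwI⟩ := Finset.mem_erase.1 hw
        rw [hfw w hwI hwv]
        ring
      rw [Finset.sum_congr rfl this, Finset.sum_erase_eq_sub hv]
      rw [← Nat.cast_sum, sum_lcount hconn hcard]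
    rw [hDD, hL]
    ring
  · rw [← Finset.add_sum_erase _ _ hv]
    show f v ^ 2 + (∑ x ∈ I.erase v, f x ^ 2) = _
    rw [hfv]
    congr 1
    have : ∀ w ∈ I.erase v, f w ^ 2 = 1 := by
      intro w hw
      obtain ⟨hwv, hwI⟩ := Finset.mem_erase.1 hw
      rw [hfw w hwI hwv]; norm_num
    rw [Finset.sum_congr rfl this, Finset.sum_const, Finset.card_erase_of_mem hv,
      nsmul_eq_mul, mul_one, Nat.cast_sub hone, Nat.cast_one]

end Rayleigh
section Star
variable {V : Type*} [Fintype V] {T : SimpleGraph V}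
set_option linter.unusedSectionVars false

/-- Structure of the extremal tree: interior is a star centered at `v`, with `a+1`
leaves at `v` and `a` leaves at each other interior vertex. -/
def GoodStar {V : Type*} [Fintype V] (a : ℕ) (T : SimpleGraph V) (v : V) : Prop :=
  v ∉ leaves T ∧
  (∀ w, w ∉ leaves T → w ≠ v → T.Adj v w) ∧
  (∀ w, w ∉ leaves T → ∀ w', w' ∉ leaves T → T.Adj w w' → w = v ∨ w' = v) ∧
  lcount T v = a + 1 ∧
  (∀ w, w ∉ leaves T → w ≠ v → lcount T w = a)

lemma star_energy {v : V} (hv : v ∈ (leaves T)ᶜ)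
    (h2 : ∀ w ∈ (leaves T)ᶜ, w ≠ v → T.Adj v w)
    (h3 : ∀ w ∈ (leaves T)ᶜ, ∀ w' ∈ (leaves T)ᶜ, T.Adj w w' → w = v ∨ w' = v)
    (f : V → ℝ) (hf : ∀ x ∈ leaves T, f x = 0) :
    dirichletForm T f =
      (∑ w ∈ (leaves T)ᶜ.erase v, ((f v - f w) ^ 2 + (lcount T w : ℝ) * f w ^ 2))
        + (lcount T v : ℝ) * f v ^ 2 := by
  set I := (leaves T)ᶜ with hI
  rw [energy_decomp f hf]
  have hfilv : I.filter (T.Adj v) = I.erase v := by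
    ext u
    simp only [Finset.mem_filter, Finset.mem_erase]
    constructor
    · rintro ⟨hu, hadj⟩
      exact ⟨(T.ne_of_adj hadj).symm, hu⟩
    · rintro ⟨hne, hu⟩
      exact ⟨hu, h2 u hu hne⟩
  have hrow_v : (∑ y ∈ I, if T.Adj v y then (f v - f y) ^ 2 else 0)
      = ∑ y ∈ I.erase v, (f v - f y) ^ 2 := by
    rw [← Finset.sum_filter, hfilv]
  have hrow_w : ∀ x ∈ I.erase v,
      (∑ y ∈ I, if T.Adj x y then (f x - f y) ^ 2 else 0) = (f v - f x) ^ 2 := by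
    intro x hx
    obtain ⟨hxv, hxI⟩ := Finset.mem_erase.1 hx
    have hfil : I.filter (T.Adj x) = {v} := by
      ext u
      simp only [Finset.mem_filter, Finset.mem_singleton]
      constructor
      · rintro ⟨hu, hadj⟩
        rcases h3 x hxI u hu hadj with h | h
        · exact absurd h hxv
        · exact h
      · rintro rfl
        exact ⟨hv, (h2 x hxI hxv).symm⟩
    rw [← Finset.sum_filter, hfil, Finset.sum_singleton]
    ring
  have hDD : (∑ x ∈ I, ∑ y ∈ I, if T.Adj x y then (f x - f y) ^ 2 else 0)
      = 2 * ∑ y ∈ I.erase v, (f v - f y) ^ 2 := by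
    rw [← Finset.add_sum_erase _ _ hv, hrow_v, Finset.sum_congr rfl hrow_w]
    ring
  rw [hDD, ← Finset.add_sum_erase _ (fun x => (lcount T x : ℝ) * f x ^ 2) hv,
    Finset.sum_add_distrib]
  ring

lemma branch_nonneg {κ s x y : ℝ} (hκ : 0 < κ) (hs : 0 < s)
    (hid : s ^ 2 + κ * s - κ = 0) :
    0 ≤ κ * (x - y) ^ 2 + κ * (s - 1) * y ^ 2 + s * x ^ 2 := by
  have key : (κ + s) * (κ * (x - y) ^ 2 + κ * (s - 1) * y ^ 2 + s * x ^ 2)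
      = ((κ + s) * x - κ * y) ^ 2 + κ * y ^ 2 * (s ^ 2 + κ * s - κ) := by ring
  rw [hid, mul_zero, add_zero] at key
  nlinarith [key, sq_nonneg ((κ + s) * x - κ * y), hκ, hs]

lemma star_lower (a k : ℕ) (ha : 1 ≤ a) (hk : 2 ≤ k) {v : V}
    (hint : ((leaves T)ᶜ : Finset V).card = k) (hGS : GoodStar a T v) :
    sigma1 a k 1 ≤ lambda1 T (leaves T) := by
  obtain ⟨hv0, h20, h30, hlv, hlw0⟩ := hGS
  have hv : v ∈ (leaves T)ᶜ := Finset.mem_compl.2 hv0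
  have h2 : ∀ w ∈ (leaves T)ᶜ, w ≠ v → T.Adj v w :=
    fun w hw => h20 w (Finset.mem_compl.1 hw)
  have h3 : ∀ w ∈ (leaves T)ᶜ, ∀ w' ∈ (leaves T)ᶜ, T.Adj w w' → w = v ∨ w' = v :=
    fun w hw w' hw' => h30 w (Finset.mem_compl.1 hw) w' (Finset.mem_compl.1 hw')
  have hlw : ∀ w ∈ (leaves T)ᶜ, w ≠ v → lcount T w = a :=
    fun w hw => hlw0 w (Finset.mem_compl.1 hw)
  obtain ⟨s, hsig, hs0, hs1, hid⟩ := sigma_fact a k hk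
  have hk' : (2:ℝ) ≤ (k:ℝ) := by exact_mod_cast hk
  have hκ : 0 < (k:ℝ) - 1 := by linarith
  have hcaste : (((leaves T)ᶜ.erase v).card : ℝ) = (k:ℝ) - 1 := by
    rw [Finset.card_erase_of_mem hv, hint, Nat.cast_sub (by omega), Nat.cast_one]
  rw [hsig]
  apply lambda1_ge
  · refine ⟨fun x => if x ∈ (leaves T)ᶜ then 1 else 0, fun x hx => ?_, fun h => ?_⟩
    · simp [hx]
    · have := congrFun h v
      simp [hv] at this
  · intro f hf hne
    rw [star_energy hv h2 h3 f hf]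
    have hterm : ∀ w ∈ (leaves T)ᶜ.erase v,
        ((a:ℝ) + 1 - s) * f w ^ 2
          ≤ ((f v - f w) ^ 2 + (lcount T w : ℝ) * f w ^ 2)
            + (s / ((k:ℝ) - 1)) * f v ^ 2 := by
      intro w hw
      obtain ⟨hwv, hwI⟩ := Finset.mem_erase.1 hw
      rw [hlw w hwI hwv, ← sub_nonneg]
      have hb := branch_nonneg hκ hs0 hid (x := f v) (y := f w)
      have heq : (f v - f w) ^ 2 + (a:ℝ) * f w ^ 2 + (s / ((k:ℝ) - 1)) * f v ^ 2
          - ((a:ℝ) + 1 - s) * f w ^ 2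
          = (((k:ℝ) - 1) * (f v - f w) ^ 2 + ((k:ℝ) - 1) * (s - 1) * f w ^ 2
              + s * f v ^ 2) / ((k:ℝ) - 1) := by
        field_simp
        ring
      rw [heq]
      exact div_nonneg hb hκ.le
    have hsum := Finset.sum_le_sum hterm
    rw [← Finset.mul_sum, Finset.sum_add_distrib, Finset.sum_const, nsmul_eq_mul,
      hcaste] at hsum
    have hκs : ((k:ℝ) - 1) * (s / ((k:ℝ) - 1) * f v ^ 2) = s * f v ^ 2 := by
      field_simp
    rw [hκs] at hsum
    have hsum2 : ((a:ℝ) + 1 - s) * (∑ w ∈ (leaves T)ᶜ.erase v, f w ^ 2)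
        ≤ (∑ w ∈ (leaves T)ᶜ.erase v, ((f v - f w) ^ 2 + (lcount T w : ℝ) * f w ^ 2))
          + s * f v ^ 2 := hsum
    have hden : (∑ x ∈ (leaves T)ᶜ, f x ^ 2)
        = f v ^ 2 + ∑ w ∈ (leaves T)ᶜ.erase v, f w ^ 2 :=
      (Finset.add_sum_erase _ _ hv).symm
    rw [hden, hlv]
    push_cast
    nlinarith [hsum2, sq_nonneg (f v), hs0]

lemma lambda1_upper (a k : ℕ) (ha : 1 ≤ a) (hk : 2 ≤ k)
    (hT : T.IsTree) (hint : ((leaves T)ᶜ : Finset V).card = k)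
    (hleaf : (leaves T).card = a * k + 1) :
    lambda1 T (leaves T) ≤ sigma1 a k 1 := by
  obtain ⟨s, hsig, hs0, hs1, hid⟩ := sigma_fact a k hk
  have hcardV : Fintype.card V = (a * k + 1) + k := by
    rw [← Finset.card_add_card_compl (leaves T), hleaf, hint]
  have hcard3 : 3 ≤ Fintype.card V := by rw [hcardV]; nlinarith
  -- pigeonhole: some interior vertex has at least a+1 leaf neighbors
  obtain ⟨v, hv, hL⟩ : ∃ v ∈ (leaves T)ᶜ, a < lcount T v := by
    apply Finset.exists_lt_of_sum_lt
    rw [sum_lcount hT.isConnected hcard3, hleaf, Finset.sum_const, hint, smul_eq_mul,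
      Nat.mul_comm k a]
    omega
  set f : V → ℝ := fun x => if x = v then s else if x ∈ (leaves T)ᶜ then 1 else 0 with hfdef
  have hf : ∀ x ∈ leaves T, f x = 0 := by
    intro x hx
    have h1 : x ≠ v := by rintro rfl; simp [Finset.mem_compl, hx] at hv
    simp [hfdef, h1, hx]
  have hne : f ≠ 0 := by
    intro h
    have := congrFun h v
    simp [hfdef] at this
    linarith
  obtain ⟨hE, hden⟩ := test_comp hT.isConnected hcard3 hv s
  have hden2 : (∑ x ∈ (leaves T)ᶜ, f x ^ 2)
      = s ^ 2 + (((leaves T)ᶜ.card : ℝ) - 1) := hden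
  have h1 := lambda1_le f hf hne
  rw [hE, hden2] at h1
  apply h1.trans
  rw [div_le_iff₀ (by rw [← hden2]; exact den_pos hf hne)]
  -- inequality: D*(s-1)^2 + L*s^2 + (b - L) ≤ (a+1-s) * (s^2 + (k-1))
  have hD : (((leaves T)ᶜ.filter (T.Adj v)).card : ℝ) ≤ (k : ℝ) - 1 := by
    have hsub : (leaves T)ᶜ.filter (T.Adj v) ⊆ (leaves T)ᶜ.erase v := by
      intro u hu
      obtain ⟨hu1, hu2⟩ := Finset.mem_filter.1 hu
      exact Finset.mem_erase.2 ⟨(T.ne_of_adj hu2).symm, hu1⟩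
    have := Finset.card_le_card hsub
    rw [Finset.card_erase_of_mem hv, hint] at this
    have hcast : (((leaves T)ᶜ.filter (T.Adj v)).card : ℝ) ≤ ((k - 1 : ℕ) : ℝ) := by
      exact_mod_cast this
    rwa [Nat.cast_sub (by omega), Nat.cast_one] at hcast
  have hLge : (a : ℝ) + 1 ≤ (lcount T v : ℝ) := by exact_mod_cast hL
  rw [hsig, hint, hleaf]
  have hids : s * (s ^ 2 + ((k:ℝ) - 1) * s - ((k:ℝ) - 1)) = 0 := by rw [hid]; ring
  have hP1 : 0 ≤ (((k:ℝ) - 1) - (((leaves T)ᶜ.filter (T.Adj v)).card : ℝ)) * (s - 1) ^ 2 :=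
    mul_nonneg (by linarith) (sq_nonneg _)
  have hP2 : 0 ≤ ((lcount T v : ℝ) - ((a:ℝ) + 1)) * (1 - s ^ 2) := by
    apply mul_nonneg (by linarith)
    nlinarith
  push_cast
  nlinarith [hP1, hP2, hids]

end Star
section Forcing
variable {V : Type*} [Fintype V] {T : SimpleGraph V}
set_option linter.unusedSectionVars false
set_option maxHeartbeats 4000000

lemma eq_implies_goodstar (a k : ℕ) (ha : 1 ≤ a) (hk : 2 ≤ k)
    (hT : T.IsTree) (hint : ((leaves T)ᶜ : Finset V).card = k)
    (hleaf : (leaves T).card = a * k + 1)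
    (heq : lambda1 T (leaves T) = sigma1 a k 1) :
    ∃ v : V, GoodStar a T v := by
  obtain ⟨s, hsig, hs0, hs1, hid⟩ := sigma_fact a k hk
  have hk' : (2:ℝ) ≤ (k:ℝ) := by exact_mod_cast hk
  have ha' : (1:ℝ) ≤ (a:ℝ) := by exact_mod_cast ha
  have hcardV : Fintype.card V = (a * k + 1) + k := by
    rw [← Finset.card_add_card_compl (leaves T), hleaf, hint]
  have hcard3 : 3 ≤ Fintype.card V := by rw [hcardV]; nlinarith
  obtain ⟨v, hv, hL⟩ : ∃ v ∈ (leaves T)ᶜ, a < lcount T v := by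
    apply Finset.exists_lt_of_sum_lt
    rw [sum_lcount hT.isConnected hcard3, hleaf, Finset.sum_const, hint, smul_eq_mul,
      Nat.mul_comm k a]
    omega
  set f : V → ℝ := fun x => if x = v then s else if x ∈ (leaves T)ᶜ then 1 else 0 with hfdef
  have hf : ∀ x ∈ leaves T, f x = 0 := by
    intro x hx
    have h1 : x ≠ v := by rintro rfl; simp [Finset.mem_compl, hx] at hv
    simp [hfdef, h1, hx]
  have hne : f ≠ 0 := by
    intro h
    have := congrFun h v
    simp [hfdef] at this
    linarith
  obtain ⟨hE, hden⟩ := test_comp hT.isConnected hcard3 hv s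
  have hden2 : (∑ x ∈ (leaves T)ᶜ, f x ^ 2)
      = s ^ 2 + (((leaves T)ᶜ.card : ℝ) - 1) := hden
  have hdpos : (0:ℝ) < ∑ x ∈ (leaves T)ᶜ, f x ^ 2 := den_pos hf hne
  have h1 := lambda1_le f hf hne
  -- upper bound: E/den ≤ sigma1 (same as lambda1_upper)
  set Dr : ℝ := (((leaves T)ᶜ.filter (T.Adj v)).card : ℝ) with hDr
  set Lr : ℝ := (lcount T v : ℝ) with hLr
  have hD : Dr ≤ (k : ℝ) - 1 := by
    have hsub : (leaves T)ᶜ.filter (T.Adj v) ⊆ (leaves T)ᶜ.erase v := by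
      intro u hu
      obtain ⟨hu1, hu2⟩ := Finset.mem_filter.1 hu
      exact Finset.mem_erase.2 ⟨(T.ne_of_adj hu2).symm, hu1⟩
    have := Finset.card_le_card hsub
    rw [Finset.card_erase_of_mem hv, hint] at this
    have hcast : Dr ≤ ((k - 1 : ℕ) : ℝ) := by rw [hDr]; exact_mod_cast this
    rwa [Nat.cast_sub (by omega), Nat.cast_one] at hcast
  have hLge : (a : ℝ) + 1 ≤ Lr := by rw [hLr]; exact_mod_cast hL
  have hids : s * (s ^ 2 + ((k:ℝ) - 1) * s - ((k:ℝ) - 1)) = 0 := by rw [hid]; ring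
  have hP1 : 0 ≤ (((k:ℝ) - 1) - Dr) * (s - 1) ^ 2 :=
    mul_nonneg (by linarith) (sq_nonneg _)
  have hP2 : 0 ≤ (Lr - ((a:ℝ) + 1)) * (1 - s ^ 2) := by
    apply mul_nonneg (by linarith)
    nlinarith
  have hEeq : dirichletForm T f
      = Dr * (s - 1) ^ 2 + Lr * s ^ 2 + (((a:ℝ) * k + 1) - Lr) := by
    rw [hE, hleaf]; push_cast; ring
  have hdeneq : (∑ x ∈ (leaves T)ᶜ, f x ^ 2) = s ^ 2 + ((k:ℝ) - 1) := by
    rw [hden2, hint]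
  have hub : dirichletForm T f ≤ ((a:ℝ) + 1 - s) * (s ^ 2 + ((k:ℝ) - 1)) := by
    rw [hEeq]
    nlinarith [hP1, hP2, hids]
  -- from equality, the Rayleigh quotient is exactly sigma1
  have hlow : ((a:ℝ) + 1 - s) ≤ dirichletForm T f / ∑ x ∈ (leaves T)ᶜ, f x ^ 2 := by
    rw [← hsig, ← heq]; exact h1
  have hEexact : dirichletForm T f = ((a:ℝ) + 1 - s) * (s ^ 2 + ((k:ℝ) - 1)) := by
    have h2' := (le_div_iff₀ hdpos).1 hlow
    rw [hdeneq] at h2'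
    linarith
  -- deduce Dr = k-1 and Lr = a+1
  have hsum0 : (((k:ℝ) - 1) - Dr) * (s - 1) ^ 2 + (Lr - ((a:ℝ) + 1)) * (1 - s ^ 2) = 0 := by
    have := hEexact
    rw [hEeq] at this
    nlinarith [this, hids]
  have hDeq : Dr = (k:ℝ) - 1 := by
    have hz : (((k:ℝ) - 1) - Dr) * (s - 1) ^ 2 = 0 := by nlinarith [hsum0, hP1, hP2]
    have : ((k:ℝ) - 1) - Dr = 0 := by
      rcases mul_eq_zero.1 hz with h | h
      · exact h
      · exfalso; nlinarith [h]
    linarith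
  have hLeq : Lr = (a:ℝ) + 1 := by
    have hz : (Lr - ((a:ℝ) + 1)) * (1 - s ^ 2) = 0 := by nlinarith [hsum0, hP1, hP2]
    have : Lr - ((a:ℝ) + 1) = 0 := by
      rcases mul_eq_zero.1 hz with h | h
      · exact h
      · exfalso; nlinarith [h]
    linarith
  have hLnat : lcount T v = a + 1 := by
    have : (lcount T v : ℝ) = ((a + 1 : ℕ) : ℝ) := by rw [← hLr, hLeq]; push_cast; ring
    exact_mod_cast this
  have hDnat : ((leaves T)ᶜ.filter (T.Adj v)).card = k - 1 := by
    have : Dr = ((k - 1 : ℕ) : ℝ) := by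
      rw [hDeq, Nat.cast_sub (by omega), Nat.cast_one]
    rw [hDr] at this
    exact_mod_cast this
  clear_value f Dr Lr
  clear hden hden2 hE hEeq hdeneq hub hlow hEexact hsum0 h1 hdpos hne hf hfdef hP1 hP2 hD hLge hDr hLr hDeq hLeq f Dr Lr
  -- the interior is a star centered at v
  have hfilter_eq : (leaves T)ᶜ.filter (T.Adj v) = (leaves T)ᶜ.erase v := by
    apply Finset.eq_of_subset_of_card_le
    · intro u hu
      obtain ⟨hu1, hu2⟩ := Finset.mem_filter.1 hu
      exact Finset.mem_erase.2 ⟨(T.ne_of_adj hu2).symm, hu1⟩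
    · rw [Finset.card_erase_of_mem hv, hint, hDnat]
  have h2 : ∀ w ∈ (leaves T)ᶜ, w ≠ v → T.Adj v w := by
    intro w hw hne'
    have : w ∈ (leaves T)ᶜ.filter (T.Adj v) := by
      rw [hfilter_eq]; exact Finset.mem_erase.2 ⟨hne', hw⟩
    exact (Finset.mem_filter.1 this).2
  have h3 : ∀ w ∈ (leaves T)ᶜ, ∀ w' ∈ (leaves T)ᶜ, T.Adj w w' → w = v ∨ w' = v := by
    intro w hw w' hw' hadj
    by_contra hcon
    push_neg at hcon
    obtain ⟨hwv, hw'v⟩ := hcon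
    have hvw : T.Adj w v := (h2 w hw hwv).symm
    have hvw' : T.Adj v w' := h2 w' hw' hw'v
    have hww' : w ≠ w' := T.ne_of_adj hadj
    have hp1 : (SimpleGraph.Walk.cons hadj SimpleGraph.Walk.nil).IsPath := by
      simp [SimpleGraph.Walk.isPath_def, hww']
    have hp2 : (SimpleGraph.Walk.cons hvw
        (SimpleGraph.Walk.cons hvw' SimpleGraph.Walk.nil)).IsPath := by
      simp [SimpleGraph.Walk.isPath_def, hww', hwv, Ne.symm hw'v]
    have heqp := (hT.existsUnique_path w w').unique hp1 hp2
    have hlen := congrArg SimpleGraph.Walk.length heqp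
    simp at hlen
  -- each other interior vertex has lcount = degree - 1 ≥ 1
  have hlcount_ge : ∀ w ∈ (leaves T)ᶜ.erase v, 1 ≤ lcount T w := by
    intro w hw
    obtain ⟨hwv, hwI⟩ := Finset.mem_erase.1 hw
    have hfil1 : (leaves T)ᶜ.filter (T.Adj w) = {v} := by
      ext u
      simp only [Finset.mem_filter, Finset.mem_singleton]
      constructor
      · rintro ⟨hu, hadj⟩
        rcases h3 w hwI u hu hadj with h | h
        · exact absurd h hwv
        · exact h
      · rintro rfl
        exact ⟨hv, (h2 w hwI hwv).symm⟩
    have hdegsplit : T.degree w = lcount T w + ((leaves T)ᶜ.filter (T.Adj w)).card := by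
      have hdeg : T.degree w = (Finset.univ.filter (T.Adj w)).card := by
        rw [← SimpleGraph.neighborFinset_eq_filter]; rfl
      rw [hdeg, lcount, ← Finset.card_union_of_disjoint
        (Finset.disjoint_filter_filter disjoint_compl_right),
        ← Finset.filter_union, Finset.union_compl]
    have hdeg1 : T.degree w ≠ 1 := mem_interior_iff.1 hwI
    rw [hfil1, Finset.card_singleton] at hdegsplit
    omega
  -- sum of lcounts over the other interior vertices
  have hsum_erase : ∑ w ∈ (leaves T)ᶜ.erase v, lcount T w = a * (k - 1) := by
    have htot : ∑ x ∈ (leaves T)ᶜ, lcount T x = (leaves T).card :=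
      sum_lcount hT.isConnected hcard3
    have hsplit : lcount T v + ∑ w ∈ (leaves T)ᶜ.erase v, lcount T w
        = ∑ x ∈ (leaves T)ᶜ, lcount T x := Finset.add_sum_erase _ _ hv
    have hak : a * (k - 1) + a = a * k := by
      have hk1 : k - 1 + 1 = k := by omega
      calc a * (k - 1) + a = a * ((k - 1) + 1) := by ring
        _ = a * k := by rw [hk1]
    rw [hleaf] at htot
    omega
  -- no interior vertex has fewer than a leaf-neighbors
  have hlcount_ge_a : ∀ w ∈ (leaves T)ᶜ.erase v, a ≤ lcount T w := by
    intro w₀ hw₀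
    by_contra hlt
    push_neg at hlt
    obtain ⟨hw₀v, hw₀I⟩ := Finset.mem_erase.1 hw₀
    set g : V → ℝ := fun x => if x = v then s else if x = w₀ then 2
      else if x ∈ (leaves T)ᶜ then 1 else 0 with hgdef
    have hgv : g v = s := by simp [hgdef]
    have hgw₀ : g w₀ = 2 := by simp [hgdef, hw₀v]
    have hgw : ∀ x ∈ (leaves T)ᶜ, x ≠ v → x ≠ w₀ → g x = 1 := by
      intro x hx h1 h2'
      simp [hgdef, h1, h2', Finset.mem_compl.1 hx]
    have hg : ∀ x ∈ leaves T, g x = 0 := by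
      intro x hx
      have h1 : x ≠ v := by rintro rfl; simp [Finset.mem_compl, hx] at hv
      have h2' : x ≠ w₀ := by rintro rfl; simp [Finset.mem_compl, hx] at hw₀I
      simp [hgdef, h1, h2', hx]
    have hgne : g ≠ 0 := by
      intro h
      have := congrFun h v
      simp [hgdef] at this
      linarith
    have hEg := star_energy hv h2 h3 g hg
    -- evaluate the energy of g
    have hsum_split := Finset.add_sum_erase ((leaves T)ᶜ.erase v)
      (fun w => ((g v - g w) ^ 2 + (lcount T w : ℝ) * g w ^ 2)) hw₀
    have hcard2 : (((leaves T)ᶜ.erase v).erase w₀).card = k - 2 := by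
      rw [Finset.card_erase_of_mem hw₀, Finset.card_erase_of_mem hv, hint]
      omega
    have hterm_others : ∀ w ∈ ((leaves T)ᶜ.erase v).erase w₀,
        ((g v - g w) ^ 2 + (lcount T w : ℝ) * g w ^ 2)
          = (s - 1) ^ 2 + (lcount T w : ℝ) := by
      intro w hw
      obtain ⟨hww₀, hw'⟩ := Finset.mem_erase.1 hw
      obtain ⟨hwv, hwI⟩ := Finset.mem_erase.1 hw'
      rw [hgv, hgw w hwI hwv hww₀]
      ring
    have hsum_lc : ∑ w ∈ ((leaves T)ᶜ.erase v).erase w₀, (lcount T w : ℝ)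
        = (a:ℝ) * ((k:ℝ) - 1) - (lcount T w₀ : ℝ) := by
      rw [Finset.sum_erase_eq_sub hw₀, ← Nat.cast_sum, hsum_erase]
      push_cast [Nat.cast_sub (by omega : 1 ≤ k)]
      ring
    have hEg2 : dirichletForm T g
        = (s - 2) ^ 2 + 4 * (lcount T w₀ : ℝ) + ((k:ℝ) - 2) * (s - 1) ^ 2
          + ((a:ℝ) * ((k:ℝ) - 1) - (lcount T w₀ : ℝ)) + ((a:ℝ) + 1) * s ^ 2 := by
      rw [hEg, hLnat, ← hsum_split, Finset.sum_congr rfl hterm_others,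
        Finset.sum_add_distrib, Finset.sum_const, hcard2, nsmul_eq_mul, hsum_lc,
        Nat.cast_sub (show 2 ≤ k by omega)]
      simp only [hgv, hgw₀]
      push_cast
      ring
    have hdeng : (∑ x ∈ (leaves T)ᶜ, g x ^ 2) = s ^ 2 + 4 + ((k:ℝ) - 2) := by
      have hsp1 : (∑ x ∈ (leaves T)ᶜ, g x ^ 2)
          = g v ^ 2 + ∑ x ∈ (leaves T)ᶜ.erase v, g x ^ 2 :=
        (Finset.add_sum_erase _ (fun x => g x ^ 2) hv).symm
      have hsp2 : (∑ x ∈ (leaves T)ᶜ.erase v, g x ^ 2)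
          = g w₀ ^ 2 + ∑ x ∈ ((leaves T)ᶜ.erase v).erase w₀, g x ^ 2 :=
        (Finset.add_sum_erase _ (fun x => g x ^ 2) hw₀).symm
      have hothers : ∀ w ∈ ((leaves T)ᶜ.erase v).erase w₀, g w ^ 2 = 1 := by
        intro w hw
        obtain ⟨hww₀, hw'⟩ := Finset.mem_erase.1 hw
        obtain ⟨hwv, hwI⟩ := Finset.mem_erase.1 hw'
        rw [hgw w hwI hwv hww₀]; norm_num
      rw [hsp1, hsp2, Finset.sum_congr rfl hothers, Finset.sum_const, hcard2,
        nsmul_eq_mul, mul_one, Nat.cast_sub (show 2 ≤ k by omega), hgv, hgw₀]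
      push_cast
      ring
    have hlt' : (lcount T w₀ : ℝ) ≤ (a:ℝ) - 1 := by
      have : lcount T w₀ + 1 ≤ a := hlt
      have := (Nat.cast_le (α := ℝ)).2 this
      push_cast at this
      linarith
    have hstrict : dirichletForm T g < ((a:ℝ) + 1 - s) * (s ^ 2 + 4 + ((k:ℝ) - 2)) := by
      rw [hEg2]
      nlinarith [hids, hlt', hs0, hs1, hk', ha']
    have hgle := lambda1_le g hg hgne
    rw [hdeng] at hgle
    rw [heq, hsig] at hgle
    have hdgpos : (0:ℝ) < s ^ 2 + 4 + ((k:ℝ) - 2) := by nlinarith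
    have : dirichletForm T g / (s ^ 2 + 4 + ((k:ℝ) - 2)) < ((a:ℝ) + 1 - s) := by
      rw [div_lt_iff₀ hdgpos]
      linarith
    linarith
  -- conclude: all other interior vertices have lcount = a
  have hlw : ∀ w ∈ (leaves T)ᶜ, w ≠ v → lcount T w = a := by
    intro w hwI hwv
    have hw : w ∈ (leaves T)ᶜ.erase v := Finset.mem_erase.2 ⟨hwv, hwI⟩
    by_contra hne'
    have hgt : a < lcount T w := lt_of_le_of_ne (hlcount_ge_a w hw) (Ne.symm hne')
    have hlt := Finset.sum_lt_sum (fun i hi => hlcount_ge_a i hi) ⟨w, hw, hgt⟩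
    rw [hsum_erase, Finset.sum_const, Finset.card_erase_of_mem hv, hint,
      smul_eq_mul, Nat.mul_comm] at hlt
    omega
  exact ⟨v, Finset.mem_compl.1 hv, fun w hw hne' => h2 w (Finset.mem_compl.2 hw) hne',
    fun w hw w' hw' hadj => h3 w (Finset.mem_compl.2 hw) w' (Finset.mem_compl.2 hw') hadj,
    hLnat, fun w hw hne' => hlw w (Finset.mem_compl.2 hw) hne'⟩

end Forcing
section SLPFacts
variable (a k : ℕ)

lemma slp_adj_path (x : SLPVert (a+1) a 0 (k-1) 0) :
    (SLP (a+1) a 0 (k-1) 0).Adj (.path 0) x ↔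
      (∃ i, x = .dbr i) ∨ (∃ j, x = .pleaf0 j) := by
  cases x with
  | path j =>
    have hj : j = 0 := by omega
    simp [SLP, SLPRel, SimpleGraph.fromRel_adj, hj]
  | dbr j => simp [SLP, SLPRel, SimpleGraph.fromRel_adj]
  | ebr j => exact j.elim0
  | pleaf0 j => simp [SLP, SLPRel, SimpleGraph.fromRel_adj]
  | pleafc j => exact j.elim0
  | qleafD j m => simp [SLP, SLPRel, SimpleGraph.fromRel_adj]
  | qleafE j m => exact j.elim0
  | qleafM j m => exact j.elim0

lemma slp_adj_dbr (i : Fin (k-1)) (x : SLPVert (a+1) a 0 (k-1) 0) :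
    (SLP (a+1) a 0 (k-1) 0).Adj (.dbr i) x ↔
      (x = .path 0 ∨ ∃ m : Fin a, x = .qleafD i m) := by
  cases x with
  | path j =>
    have hj : j = 0 := by omega
    simp [SLP, SLPRel, SimpleGraph.fromRel_adj, hj]
  | dbr j => simp [SLP, SLPRel, SimpleGraph.fromRel_adj]
  | ebr j => exact j.elim0
  | pleaf0 j => simp [SLP, SLPRel, SimpleGraph.fromRel_adj]
  | pleafc j => exact j.elim0
  | qleafD j m => simp [SLP, SLPRel, SimpleGraph.fromRel_adj, eq_comm]
  | qleafE j m => exact j.elim0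
  | qleafM j m => exact j.elim0

lemma slp_adj_pleaf0 (j : Fin (a+1)) (x : SLPVert (a+1) a 0 (k-1) 0) :
    (SLP (a+1) a 0 (k-1) 0).Adj (.pleaf0 j) x ↔ x = .path 0 := by
  cases x with
  | path j' =>
    have hj : j' = 0 := by omega
    simp [SLP, SLPRel, SimpleGraph.fromRel_adj, hj]
  | dbr j' => simp [SLP, SLPRel, SimpleGraph.fromRel_adj]
  | ebr j' => exact j'.elim0
  | pleaf0 j' => simp [SLP, SLPRel, SimpleGraph.fromRel_adj]
  | pleafc j' => exact j'.elim0
  | qleafD j' m => simp [SLP, SLPRel, SimpleGraph.fromRel_adj]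
  | qleafE j' m => exact j'.elim0
  | qleafM j' m => exact j'.elim0

lemma slp_adj_qleafD (i : Fin (k-1)) (m : Fin a) (x : SLPVert (a+1) a 0 (k-1) 0) :
    (SLP (a+1) a 0 (k-1) 0).Adj (.qleafD i m) x ↔ x = .dbr i := by
  cases x with
  | path j' =>
    have hj : j' = 0 := by omega
    simp [SLP, SLPRel, SimpleGraph.fromRel_adj, hj]
  | dbr j' => simp [SLP, SLPRel, SimpleGraph.fromRel_adj, eq_comm]
  | ebr j' => exact j'.elim0
  | pleaf0 j' => simp [SLP, SLPRel, SimpleGraph.fromRel_adj]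
  | pleafc j' => exact j'.elim0
  | qleafD j' m' => simp [SLP, SLPRel, SimpleGraph.fromRel_adj]
  | qleafE j' m' => exact j'.elim0
  | qleafM j' m' => exact j'.elim0

lemma slp_deg_path :
    (SLP (a+1) a 0 (k-1) 0).degree (.path 0) = (k - 1) + (a + 1) := by
  have hN : (SLP (a+1) a 0 (k-1) 0).neighborFinset (.path 0)
      = Finset.univ.image SLPVert.dbr ∪ Finset.univ.image SLPVert.pleaf0 := by
    ext y
    rw [SimpleGraph.mem_neighborFinset, slp_adj_path]
    simp [Finset.mem_image, eq_comm]
  rw [SimpleGraph.degree, hN, Finset.card_union_of_disjoint, Finset.card_image_of_injective,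
    Finset.card_image_of_injective]
  · simp
  · intro x y h; simpa using h
  · intro x y h; simpa using h
  · rw [Finset.disjoint_left]
    rintro x hx hx'
    simp only [Finset.mem_image] at hx hx'
    obtain ⟨i, _, rfl⟩ := hx
    obtain ⟨j, _, h⟩ := hx'
    exact nomatch h

lemma slp_deg_dbr (i : Fin (k-1)) :
    (SLP (a+1) a 0 (k-1) 0).degree (.dbr i) = 1 + a := by
  have hN : (SLP (a+1) a 0 (k-1) 0).neighborFinset (.dbr i)
      = insert (SLPVert.path 0) (Finset.univ.image (SLPVert.qleafD i)) := by
    ext y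
    rw [SimpleGraph.mem_neighborFinset, slp_adj_dbr]
    simp [Finset.mem_image, eq_comm]
  rw [SimpleGraph.degree, hN, Finset.card_insert_of_notMem, Finset.card_image_of_injective]
  · simp [Nat.add_comm]
  · intro x y h; simpa using h
  · simp only [Finset.mem_image]
    rintro ⟨m, _, h⟩
    exact nomatch h

lemma slp_deg_pleaf0 (j : Fin (a+1)) :
    (SLP (a+1) a 0 (k-1) 0).degree (.pleaf0 j) = 1 := by
  have hN : (SLP (a+1) a 0 (k-1) 0).neighborFinset (.pleaf0 j) = {SLPVert.path 0} := by
    ext y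
    rw [SimpleGraph.mem_neighborFinset, slp_adj_pleaf0]
    simp
  rw [SimpleGraph.degree, hN, Finset.card_singleton]

lemma slp_deg_qleafD (i : Fin (k-1)) (m : Fin a) :
    (SLP (a+1) a 0 (k-1) 0).degree (.qleafD i m) = 1 := by
  have hN : (SLP (a+1) a 0 (k-1) 0).neighborFinset (.qleafD i m) = {SLPVert.dbr i} := by
    ext y
    rw [SimpleGraph.mem_neighborFinset, slp_adj_qleafD]
    simp
  rw [SimpleGraph.degree, hN, Finset.card_singleton]

lemma slp_not_leaf (ha : 1 ≤ a) (hk : 2 ≤ k) (z : SLPVert (a+1) a 0 (k-1) 0) :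
    z ∉ leaves (SLP (a+1) a 0 (k-1) 0)
      ↔ (z = SLPVert.path 0 ∨ ∃ i, z = SLPVert.dbr i) := by
  rw [mem_leaves_iff]
  cases z with
  | path j =>
    have hj : j = 0 := by omega
    subst hj
    simp [slp_deg_path]
    omega
  | dbr j => simp [slp_deg_dbr]; omega
  | ebr j => exact j.elim0
  | pleaf0 j => simp [slp_deg_pleaf0]
  | pleafc j => exact j.elim0
  | qleafD j m => simp [slp_deg_qleafD]
  | qleafE j m => exact j.elim0
  | qleafM j m => exact j.elim0

lemma slp_lcount_path (ha : 1 ≤ a) (hk : 2 ≤ k) :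
    lcount (SLP (a+1) a 0 (k-1) 0) (.path 0) = a + 1 := by
  have hfil : (leaves (SLP (a+1) a 0 (k-1) 0)).filter ((SLP (a+1) a 0 (k-1) 0).Adj (.path 0))
      = Finset.univ.image SLPVert.pleaf0 := by
    ext y
    rw [Finset.mem_filter, mem_leaves_iff, slp_adj_path]
    cases y with
    | path j => simp [Finset.mem_image]
    | dbr j => simp [slp_deg_dbr, Finset.mem_image]; omega
    | ebr j => exact j.elim0
    | pleaf0 j => simp [slp_deg_pleaf0, Finset.mem_image]
    | pleafc j => exact j.elim0
    | qleafD j m => simp [Finset.mem_image]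
    | qleafE j m => exact j.elim0
    | qleafM j m => exact j.elim0
  rw [lcount, hfil, Finset.card_image_of_injective _ (fun x y h => by simpa using h)]
  simp

lemma slp_lcount_dbr (ha : 1 ≤ a) (hk : 2 ≤ k) (i : Fin (k-1)) :
    lcount (SLP (a+1) a 0 (k-1) 0) (.dbr i) = a := by
  have hfil : (leaves (SLP (a+1) a 0 (k-1) 0)).filter ((SLP (a+1) a 0 (k-1) 0).Adj (.dbr i))
      = Finset.univ.image (SLPVert.qleafD i) := by
    ext y
    rw [Finset.mem_filter, mem_leaves_iff, slp_adj_dbr]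
    cases y with
    | path j =>
      have hj : j = 0 := by omega
      subst hj
      simp [slp_deg_path, Finset.mem_image]
      omega
    | dbr j => simp [Finset.mem_image]
    | ebr j => exact j.elim0
    | pleaf0 j => simp [slp_deg_pleaf0, Finset.mem_image]
    | pleafc j => exact j.elim0
    | qleafD j m => simp [slp_deg_qleafD, Finset.mem_image, eq_comm]
    | qleafE j m => exact j.elim0
    | qleafM j m => exact j.elim0
  rw [lcount, hfil, Finset.card_image_of_injective _ (fun x y h => by simpa using h)]
  simp

lemma slp_goodstar (ha : 1 ≤ a) (hk : 2 ≤ k) :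
    GoodStar a (SLP (a+1) a 0 (k-1) 0) (.path 0) := by
  have hmem := slp_not_leaf a k ha hk
  refine ⟨?_, ?_, ?_, slp_lcount_path a k ha hk, ?_⟩
  · rw [hmem]; left; rfl
  · intro w hw hne
    rw [hmem] at hw
    rcases hw with rfl | ⟨i, rfl⟩
    · exact absurd rfl hne
    · rw [slp_adj_path]; left; exact ⟨i, rfl⟩
  · intro w hw w' hw' hadj
    rw [hmem] at hw hw'
    rcases hw with rfl | ⟨i, rfl⟩
    · left; rfl
    · rcases hw' with rfl | ⟨i', rfl⟩
      · right; rfl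
      · rw [slp_adj_dbr] at hadj
        rcases hadj with h | ⟨m, h⟩ <;> exact nomatch h
  · intro w hw hne
    rw [hmem] at hw
    rcases hw with rfl | ⟨i, rfl⟩
    · exact absurd rfl hne
    · exact slp_lcount_dbr a k ha hk i

end SLPFacts

section Transfer
variable {V : Type*} {W : Type*} [Fintype V] [Fintype W]
variable {T : SimpleGraph V} {H : SimpleGraph W}
set_option linter.unusedSectionVars false

lemma iso_degree (e : T ≃g H) (x : V) : H.degree (e x) = T.degree x := by
  rw [← SimpleGraph.card_neighborSet_eq_degree, ← SimpleGraph.card_neighborSet_eq_degree]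
  exact (Fintype.card_congr (e.mapNeighborSet x)).symm

lemma iso_mem_leaves (e : T ≃g H) (x : V) : e x ∈ leaves H ↔ x ∈ leaves T := by
  rw [mem_leaves_iff, mem_leaves_iff, iso_degree]

lemma iso_lcount (e : T ≃g H) (x : V) : lcount H (e x) = lcount T x := by
  rw [lcount, lcount]
  symm
  apply Finset.card_bij (fun y _ => e y)
  · intro y hy
    obtain ⟨hy1, hy2⟩ := Finset.mem_filter.1 hy
    refine Finset.mem_filter.2 ⟨(iso_mem_leaves e y).2 hy1, ?_⟩
    exact e.map_rel_iff.2 hy2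
  · intro y1 _ y2 _ h
    exact e.injective h
  · intro z hz
    obtain ⟨hz1, hz2⟩ := Finset.mem_filter.1 hz
    refine ⟨e.symm z, Finset.mem_filter.2 ⟨?_, ?_⟩, by simp⟩
    · have : e (e.symm z) ∈ leaves H := by simpa using hz1
      exact (iso_mem_leaves e _).1 this
    · have : H.Adj (e x) (e (e.symm z)) := by simpa using hz2
      exact e.map_rel_iff.1 this

lemma goodstar_transfer {a : ℕ} (e : T ≃g H) {u : W} (hGS : GoodStar a H u) :
    GoodStar a T (e.symm u) := by
  obtain ⟨h1, h2, h3, h4, h5⟩ := hGS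
  have hmem : ∀ x : V, x ∉ leaves T → e x ∉ leaves H := by
    intro x hx h
    exact hx ((iso_mem_leaves e x).1 h)
  refine ⟨?_, ?_, ?_, ?_, ?_⟩
  · intro h
    exact h1 (by simpa using (iso_mem_leaves e (e.symm u)).2 h)
  · intro w hw hne
    have hadj : H.Adj u (e w) := by
      apply h2 (e w) (hmem w hw)
      intro h
      exact hne (by rw [← h]; simp)
    have : H.Adj (e (e.symm u)) (e w) := by simpa using hadj
    exact e.map_rel_iff.1 this
  · intro w hw w' hw' hadj
    have := h3 (e w) (hmem w hw) (e w') (hmem w' hw') (e.map_rel_iff.2 hadj)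
    rcases this with h | h
    · left; rw [← h]; simp
    · right; rw [← h]; simp
  · have := iso_lcount e (e.symm u)
    rw [show e (e.symm u) = u by simp] at this
    rw [← this, h4]
  · intro w hw hne
    have huw : e w ≠ u := by
      intro h
      exact hne (by rw [← h]; simp)
    rw [← iso_lcount e w]
    exact h5 (e w) (hmem w hw) huw

end Transfer
section IsoConstruction
variable {V : Type*} [Fintype V]
set_option linter.unusedSectionVars false
set_option maxHeartbeats 2000000

/-- The vertex correspondence from the abstract star-like structure to `SLP`. -/
noncomputable def slpMap (a k : ℕ) (T : SimpleGraph V) (v : V)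
    (eW : Fin (k-1) ≃ {x // x ∈ (leaves T)ᶜ.erase v})
    (eLv : Fin (a+1) ≃ {x // x ∈ (leaves T).filter (T.Adj v)})
    (eL : (w : {x // x ∈ (leaves T)ᶜ.erase v}) →
      Fin a ≃ {x // x ∈ (leaves T).filter (T.Adj ↑w)}) :
    SLPVert (a+1) a 0 (k-1) 0 → V
  | .path _ => v
  | .dbr i => ↑(eW i)
  | .ebr j => j.elim0
  | .pleaf0 j => ↑(eLv j)
  | .pleafc j => j.elim0
  | .qleafD i m => ↑(eL (eW i) m)
  | .qleafE j _ => j.elim0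
  | .qleafM j _ => j.elim0

lemma goodstar_iso {T : SimpleGraph V} (a k : ℕ) (ha : 1 ≤ a) (hk : 2 ≤ k)
    (hT : T.IsTree) (hint : ((leaves T)ᶜ : Finset V).card = k)
    (hleaf : (leaves T).card = a * k + 1)
    {v : V} (hGS : GoodStar a T v) :
    Nonempty (T ≃g SLP (a+1) a 0 (k-1) 0) := by
  obtain ⟨hv0, h2, h3, hlv, hlw⟩ := hGS
  have hv : v ∈ (leaves T)ᶜ := Finset.mem_compl.2 hv0
  have hconn := hT.isConnected
  have hcardV : Fintype.card V = (a * k + 1) + k := by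
    rw [← Finset.card_add_card_compl (leaves T), hleaf, hint]
  have hcard3 : 3 ≤ Fintype.card V := by rw [hcardV]; nlinarith
  have hWcard : Fintype.card {x // x ∈ (leaves T)ᶜ.erase v} = k - 1 := by
    rw [Fintype.card_coe, Finset.card_erase_of_mem hv, hint]
  have hLvcard : Fintype.card {x // x ∈ (leaves T).filter (T.Adj v)} = a + 1 := by
    rw [Fintype.card_coe]; exact hlv
  have eW : Fin (k-1) ≃ {x // x ∈ (leaves T)ᶜ.erase v} :=
    (Fintype.equivFinOfCardEq hWcard).symm
  have eLv : Fin (a+1) ≃ {x // x ∈ (leaves T).filter (T.Adj v)} :=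
    (Fintype.equivFinOfCardEq hLvcard).symm
  have eL : (w : {x // x ∈ (leaves T)ᶜ.erase v}) →
      Fin a ≃ {x // x ∈ (leaves T).filter (T.Adj ↑w)} := by
    intro w
    have hw := Finset.mem_erase.1 w.2
    have : Fintype.card {x // x ∈ (leaves T).filter (T.Adj ↑w)} = a := by
      rw [Fintype.card_coe]
      exact hlw ↑w (Finset.mem_compl.1 hw.2) hw.1
    exact (Fintype.equivFinOfCardEq this).symm
  set ψ := slpMap a k T v eW eLv eL with hψ
  -- basic facts about the pieces
  have hWm : ∀ i, (↑(eW i) : V) ∉ leaves T :=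
    fun i => Finset.mem_compl.1 (Finset.mem_erase.1 (eW i).2).2
  have hWv : ∀ i, (↑(eW i) : V) ≠ v := fun i => (Finset.mem_erase.1 (eW i).2).1
  have hLvm : ∀ j, (↑(eLv j) : V) ∈ leaves T := fun j => (Finset.mem_filter.1 (eLv j).2).1
  have hLva : ∀ j, T.Adj v ↑(eLv j) := fun j => (Finset.mem_filter.1 (eLv j).2).2
  have hLm : ∀ (w : {x // x ∈ (leaves T)ᶜ.erase v}) (m : Fin a),
      (↑(eL w m) : V) ∈ leaves T := fun w m => (Finset.mem_filter.1 (eL w m).2).1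
  have hLa : ∀ (w : {x // x ∈ (leaves T)ᶜ.erase v}) (m : Fin a),
      T.Adj ↑w ↑(eL w m) := fun w m => (Finset.mem_filter.1 (eL w m).2).2
  have huniq : ∀ y z z', y ∈ leaves T → T.Adj z y → T.Adj z' y → z = z' := by
    intro y z z' hy hz hz'
    have h1 := leaf_nbr_eq hy hz.symm
    have h2' : z' ∈ T.neighborFinset y := by simpa [SimpleGraph.mem_neighborFinset] using hz'.symm
    rw [h1] at h2'
    have h3' : z' = z := by rwa [Finset.mem_singleton] at h2'
    exact h3'.symm
  have hleafy : ∀ y z, y ∈ leaves T → T.Adj z y → z ∉ leaves T := by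
    intro y z hy hz hz'
    exact no_adj_leaves hconn hcard3 hz' hy hz
  -- injectivity
  have hinj : Function.Injective ψ := by
    intro z1 z2 h
    rw [hψ] at h
    cases z1 with
    | path j => cases z2 with
      | path j' => congr 1; omega
      | dbr i => simp only [slpMap] at h; exact absurd h.symm (hWv i)
      | ebr j' => exact j'.elim0
      | pleaf0 j' => simp only [slpMap] at h; exact absurd (h ▸ hLvm j') hv0
      | pleafc j' => exact j'.elim0
      | qleafD i m => simp only [slpMap] at h; exact absurd (h ▸ hLm (eW i) m) hv0
      | qleafE j' m => exact j'.elim0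
      | qleafM j' m => exact j'.elim0
    | dbr i => cases z2 with
      | path j' => simp only [slpMap] at h; exact absurd h (hWv i)
      | dbr i' =>
        simp only [slpMap] at h
        have : eW i = eW i' := Subtype.ext h
        rw [eW.injective this]
      | ebr j' => exact j'.elim0
      | pleaf0 j' => simp only [slpMap] at h; exact absurd (h ▸ hLvm j') (hWm i)
      | pleafc j' => exact j'.elim0
      | qleafD i' m => simp only [slpMap] at h; exact absurd (h ▸ hLm (eW i') m) (hWm i)
      | qleafE j' m => exact j'.elim0
      | qleafM j' m => exact j'.elim0
    | ebr j => exact j.elim0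
    | pleaf0 j => cases z2 with
      | path j' => simp only [slpMap] at h; exact absurd (h.symm ▸ hLvm j) hv0
      | dbr i' => simp only [slpMap] at h; exact absurd (h.symm ▸ hLvm j) (hWm i')
      | ebr j' => exact j'.elim0
      | pleaf0 j' =>
        simp only [slpMap] at h
        have : eLv j = eLv j' := Subtype.ext h
        rw [eLv.injective this]
      | pleafc j' => exact j'.elim0
      | qleafD i' m =>
        exfalso
        simp only [slpMap] at h
        have hadj : T.Adj v ↑(eL (eW i') m) := h ▸ hLva j
        exact hWv i' (huniq _ _ _ (hLm (eW i') m) (hLa (eW i') m) hadj)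
      | qleafE j' m => exact j'.elim0
      | qleafM j' m => exact j'.elim0
    | pleafc j => exact j.elim0
    | qleafD i m => cases z2 with
      | path j' => simp only [slpMap] at h; exact absurd (h.symm ▸ hLm (eW i) m) hv0
      | dbr i' => simp only [slpMap] at h; exact absurd (h.symm ▸ hLm (eW i) m) (hWm i')
      | ebr j' => exact j'.elim0
      | pleaf0 j' =>
        exfalso
        simp only [slpMap] at h
        have hadj : T.Adj v ↑(eL (eW i) m) := h ▸ hLva j'
        exact hWv i (huniq _ _ _ (hLm (eW i) m) (hLa (eW i) m) hadj)
      | pleafc j' => exact j'.elim0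
      | qleafD i' m' =>
        simp only [slpMap] at h
        have hadj : T.Adj ↑(eW i') ↑(eL (eW i) m) := h ▸ hLa (eW i') m'
        have hii : (↑(eW i) : V) = ↑(eW i') :=
          huniq _ _ _ (hLm (eW i) m) (hLa (eW i) m) hadj
        have hii' : i = i' := eW.injective (Subtype.ext hii)
        subst hii'
        have : eL (eW i) m = eL (eW i) m' := Subtype.ext h
        rw [(eL (eW i)).injective this]
      | qleafE j' m' => exact j'.elim0
      | qleafM j' m' => exact j'.elim0
    | qleafE j m => exact j.elim0
    | qleafM j m => exact j.elim0
  -- surjectivity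
  have hsurj : Function.Surjective ψ := by
    intro x
    by_cases hxB : x ∈ leaves T
    · have hdeg : (T.neighborFinset x).card = 1 := mem_leaves_iff.1 hxB
      obtain ⟨z₀, hz₀⟩ := Finset.card_eq_one.1 hdeg
      have hadj : T.Adj x z₀ := by
        rw [← SimpleGraph.mem_neighborFinset, hz₀]; simp
      have hz₀I : z₀ ∈ (leaves T)ᶜ := leaf_nbr_interior hconn hcard3 hxB hadj
      by_cases hz₀v : z₀ = v
      · subst hz₀v
        have hmem : x ∈ (leaves T).filter (T.Adj z₀) := Finset.mem_filter.2 ⟨hxB, hadj.symm⟩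
        exact ⟨.pleaf0 (eLv.symm ⟨x, hmem⟩), by rw [hψ]; simp [slpMap]⟩
      · have hzW : z₀ ∈ (leaves T)ᶜ.erase v := Finset.mem_erase.2 ⟨hz₀v, hz₀I⟩
        obtain ⟨i, hi⟩ : ∃ i, eW i = (⟨z₀, hzW⟩ : {x // x ∈ (leaves T)ᶜ.erase v}) :=
          ⟨eW.symm ⟨z₀, hzW⟩, by simp⟩
        have hmem : x ∈ (leaves T).filter (T.Adj ↑(eW i)) := by
          rw [hi]
          exact Finset.mem_filter.2 ⟨hxB, hadj.symm⟩
        exact ⟨.qleafD i ((eL (eW i)).symm ⟨x, hmem⟩), by rw [hψ]; simp [slpMap]⟩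
    · have hxI : x ∈ (leaves T)ᶜ := Finset.mem_compl.2 hxB
      by_cases hxv : x = v
      · exact ⟨.path 0, by rw [hψ, hxv]; simp [slpMap]⟩
      · have hxW : x ∈ (leaves T)ᶜ.erase v := Finset.mem_erase.2 ⟨hxv, hxI⟩
        exact ⟨.dbr (eW.symm ⟨x, hxW⟩), by rw [hψ]; simp [slpMap]⟩
  -- the relation is preserved
  have hrel : ∀ z1 z2, T.Adj (ψ z1) (ψ z2) ↔ (SLP (a+1) a 0 (k-1) 0).Adj z1 z2 := by
    intro z1 z2
    rw [hψ]
    cases z1 with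
    | path j =>
      have hj : j = 0 := by omega
      subst hj
      cases z2 with
      | path j' =>
        have hj' : j' = 0 := by omega
        subst hj'
        simp only [slpMap]
        constructor
        · intro hadj; exact absurd hadj T.irrefl
        · intro hadj; exact absurd hadj (SLP (a+1) a 0 (k-1) 0).irrefl
      | dbr i =>
        simp only [slpMap]
        rw [slp_adj_path]
        constructor
        · intro _; left; exact ⟨i, rfl⟩
        · intro _; exact h2 _ (hWm i) (hWv i)
      | ebr j' => exact j'.elim0
      | pleaf0 j' =>
        simp only [slpMap]
        rw [slp_adj_path]
        constructor
        · intro _; right; exact ⟨j', rfl⟩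
        · intro _; exact hLva j'
      | pleafc j' => exact j'.elim0
      | qleafD i m =>
        simp only [slpMap]
        rw [slp_adj_path]
        constructor
        · intro hadj
          exact absurd (huniq _ _ _ (hLm (eW i) m) (hLa (eW i) m) hadj) (hWv i)
        · rintro (⟨i', h⟩ | ⟨j', h⟩) <;> exact nomatch h
      | qleafE j' m => exact j'.elim0
      | qleafM j' m => exact j'.elim0
    | dbr i =>
      cases z2 with
      | path j' =>
        have hj' : j' = 0 := by omega
        subst hj'
        simp only [slpMap]
        rw [SimpleGraph.adj_comm, (SLP (a+1) a 0 (k-1) 0).adj_comm, slp_adj_path]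
        constructor
        · intro _; left; exact ⟨i, rfl⟩
        · intro _; exact h2 _ (hWm i) (hWv i)
      | dbr i' =>
        simp only [slpMap]
        rw [slp_adj_dbr]
        constructor
        · intro hadj
          rcases h3 _ (hWm i) _ (hWm i') hadj with h | h
          · exact absurd h (hWv i)
          · exact absurd h (hWv i')
        · rintro (h | ⟨m, h⟩) <;> exact nomatch h
      | ebr j' => exact j'.elim0
      | pleaf0 j' =>
        simp only [slpMap]
        rw [slp_adj_dbr]
        constructor
        · intro hadj
          exact absurd (huniq _ _ _ (hLvm j') hadj (hLva j')) (hWv i)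
        · rintro (h | ⟨m, h⟩) <;> exact nomatch h
      | pleafc j' => exact j'.elim0
      | qleafD i' m =>
        simp only [slpMap]
        rw [slp_adj_dbr]
        constructor
        · intro hadj
          have := huniq _ _ _ (hLm (eW i') m) hadj (hLa (eW i') m)
          have hii : i = i' := eW.injective (Subtype.ext this)
          subst hii
          right; exact ⟨m, rfl⟩
        · rintro (h | ⟨m', h⟩)
          · exact nomatch h
          · injection h with h1 h2'
            subst h1
            first
            | exact hLa _ _
            | exact (hLa _ _).symm
      | qleafE j' m => exact j'.elim0
      | qleafM j' m => exact j'.elim0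
    | ebr j => exact j.elim0
    | pleaf0 j =>
      cases z2 with
      | path j' =>
        have hj' : j' = 0 := by omega
        subst hj'
        simp only [slpMap]
        rw [SimpleGraph.adj_comm, (SLP (a+1) a 0 (k-1) 0).adj_comm, slp_adj_path]
        constructor
        · intro _; right; exact ⟨j, rfl⟩
        · intro _; exact hLva j
      | dbr i' =>
        simp only [slpMap]
        rw [SimpleGraph.adj_comm, (SLP (a+1) a 0 (k-1) 0).adj_comm, slp_adj_dbr]
        constructor
        · intro hadj
          exact absurd (huniq _ _ _ (hLvm j) hadj (hLva j)) (hWv i')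
        · rintro (h | ⟨m, h⟩) <;> exact nomatch h
      | ebr j' => exact j'.elim0
      | pleaf0 j' =>
        simp only [slpMap]
        rw [slp_adj_pleaf0]
        constructor
        · intro hadj
          exact absurd hadj (fun h => no_adj_leaves hconn hcard3 (hLvm j) (hLvm j') h)
        · intro h; exact nomatch h
      | pleafc j' => exact j'.elim0
      | qleafD i' m =>
        simp only [slpMap]
        rw [slp_adj_pleaf0]
        constructor
        · intro hadj
          exact absurd hadj (fun h => no_adj_leaves hconn hcard3 (hLvm j) (hLm (eW i') m) h)
        · intro h; exact nomatch h
      | qleafE j' m => exact j'.elim0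
      | qleafM j' m => exact j'.elim0
    | pleafc j => exact j.elim0
    | qleafD i m =>
      cases z2 with
      | path j' =>
        have hj' : j' = 0 := by omega
        subst hj'
        simp only [slpMap]
        rw [SimpleGraph.adj_comm, (SLP (a+1) a 0 (k-1) 0).adj_comm, slp_adj_path]
        constructor
        · intro hadj
          exact absurd (huniq _ _ _ (hLm (eW i) m) (hLa (eW i) m) hadj) (hWv i)
        · rintro (⟨i', h⟩ | ⟨j', h⟩) <;> exact nomatch h
      | dbr i' =>
        simp only [slpMap]
        rw [SimpleGraph.adj_comm, (SLP (a+1) a 0 (k-1) 0).adj_comm, slp_adj_dbr]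
        constructor
        · intro hadj
          have := huniq _ _ _ (hLm (eW i) m) hadj (hLa (eW i) m)
          have hii : i' = i := eW.injective (Subtype.ext this)
          subst hii
          right; exact ⟨m, rfl⟩
        · rintro (h | ⟨m', h⟩)
          · exact nomatch h
          · injection h with h1 h2'
            subst h1
            first
            | exact hLa _ _
            | exact (hLa _ _).symm
      | ebr j' => exact j'.elim0
      | pleaf0 j' =>
        simp only [slpMap]
        rw [SimpleGraph.adj_comm, (SLP (a+1) a 0 (k-1) 0).adj_comm, slp_adj_pleaf0]
        constructor
        · intro hadj
          exact absurd hadj (fun h => no_adj_leaves hconn hcard3 (hLm (eW i) m) (hLvm j') h.symm)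
        · intro h; exact nomatch h
      | pleafc j' => exact j'.elim0
      | qleafD i' m' =>
        simp only [slpMap]
        rw [slp_adj_qleafD]
        constructor
        · intro hadj
          exact absurd hadj (fun h => no_adj_leaves hconn hcard3 (hLm (eW i) m) (hLm (eW i') m') h)
        · intro h; exact nomatch h
      | qleafE j' m' => exact j'.elim0
      | qleafM j' m' => exact j'.elim0
    | qleafE j m => exact j.elim0
    | qleafM j m => exact j.elim0
  exact ⟨(⟨Equiv.ofBijective ψ ⟨hinj, hsurj⟩, fun {z1 z2} => hrel z1 z2⟩ :
    (SLP (a+1) a 0 (k-1) 0) ≃g T).symm⟩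

end IsoConstruction
theorem stmt16 {V : Type*} [Fintype V] (a k : ℕ) (ha : 1 ≤ a) (hk : 2 ≤ k)
    (T : SimpleGraph V) (hT : T.IsTree)
    (hint : ((leaves T)ᶜ : Finset V).card = k)
    (hleaf : (leaves T).card = a * k + 1) :
    lambda1 T (leaves T) ≤ sigma1 a k 1 ∧
    (lambda1 T (leaves T) = sigma1 a k 1 ↔
      Nonempty (T ≃g SLP (a + 1) a 0 (k - 1) 0)) := by
  refine ⟨lambda1_upper a k ha hk hT hint hleaf, ?_, ?_⟩
  · intro heq
    obtain ⟨v, hGS⟩ := eq_implies_goodstar a k ha hk hT hint hleaf heq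
    exact goodstar_iso a k ha hk hT hint hleaf hGS
  · rintro ⟨e⟩
    have hGS := goodstar_transfer e (slp_goodstar a k ha hk)
    exact le_antisymm (lambda1_upper a k ha hk hT hint hleaf)
      (star_lower a k ha hk hint hGS)
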